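/- arXiv:2601.20802 — 5 statements merged into one kernel-verified Lean document; each statement's English description precedes it below -/
import Mathlib

section
/- (Closed form of the trust-region regularized teacher.) Let V be a nonempty finite type, let p and r be positive pmfs on V, let λ > 0, and set α := 1/λ. Define C := ∑_{j ∈ V} (r j)^(1−α) * (p j)^α and q* : V → ℝ by q* i := (r i)^(1−α) * (p i)^α / C; then q* is a positive pmf on V, and for every positive pmf q on V one has ∑_{i ∈ V} q i * Real.log (p i / r i) − λ * KL(q‖r) ≤ ∑_{i ∈ V} q* i * Real.log (p i / r i) − λ * KL(q*‖r), with equality if and only if q = q*. That is, the geometric interpolation q* i ∝ exp((1−α) * Real.log (r i) + α * Real.log (p i)) is the unique maximizer of the KL-penalized objective q ↦ ∑_i q i * Real.log (p i / r i) − λ * KL(q‖r). -/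
open Finset

lemma gibbs_aux {V : Type*} [Fintype V] (a b : V → ℝ)
    (ha : ∀ i, 0 < a i) (hb : ∀ i, 0 < b i)
    (hasum : ∑ i, a i = 1) (hbsum : ∑ i, b i = 1) :
    0 ≤ ∑ i, a i * Real.log (a i / b i) ∧
      ((∑ i, a i * Real.log (a i / b i)) = 0 ↔ a = b) := by
  have key : ∀ i : V, a i * Real.log (b i / a i) ≤ b i - a i := by
    intro i
    have hx : 0 < b i / a i := div_pos (hb i) (ha i)
    have := Real.log_le_sub_one_of_pos hx
    have h2 : a i * Real.log (b i / a i) ≤ a i * (b i / a i - 1) :=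
      mul_le_mul_of_nonneg_left this (ha i).le
    calc a i * Real.log (b i / a i) ≤ a i * (b i / a i - 1) := h2
      _ = b i - a i := by rw [mul_sub, mul_one, mul_div_cancel₀ _ (ha i).ne']
  have hsum_le : ∑ i, a i * Real.log (b i / a i) ≤ 0 := by
    calc ∑ i, a i * Real.log (b i / a i) ≤ ∑ i, (b i - a i) :=
          Finset.sum_le_sum (fun i _ => key i)
      _ = 0 := by rw [Finset.sum_sub_distrib, hasum, hbsum]; ring
  have hneg : ∑ i, a i * Real.log (a i / b i) = - ∑ i, a i * Real.log (b i / a i) := by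
    rw [← Finset.sum_neg_distrib]
    refine Finset.sum_congr rfl (fun i _ => ?_)
    rw [Real.log_div (ha i).ne' (hb i).ne', Real.log_div (hb i).ne' (ha i).ne']
    ring
  constructor
  · rw [hneg]; linarith
  constructor
  · intro h0
    have heq : ∑ i, a i * Real.log (b i / a i) = ∑ i, (b i - a i) := by
      rw [hneg] at h0
      rw [Finset.sum_sub_distrib, hasum, hbsum]; linarith
    have hall : ∀ i ∈ Finset.univ, a i * Real.log (b i / a i) = b i - a i := by
      intro i _
      by_contra hne
      have hlt : a i * Real.log (b i / a i) < b i - a i := lt_of_le_of_ne (key i) hne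
      have : ∑ i, a i * Real.log (b i / a i) < ∑ i, (b i - a i) :=
        Finset.sum_lt_sum (fun j _ => key j) ⟨i, Finset.mem_univ i, hlt⟩
      linarith [heq]
    funext i
    have hi := hall i (Finset.mem_univ i)
    have hx : 0 < b i / a i := div_pos (hb i) (ha i)
    by_contra hne
    have hne1 : b i / a i ≠ 1 := by
      intro h1
      exact hne ((div_eq_one_iff_eq (ha i).ne').mp h1).symm
    have := Real.log_lt_sub_one_of_pos hx hne1
    have h2 : a i * Real.log (b i / a i) < a i * (b i / a i - 1) :=
      mul_lt_mul_of_pos_left this (ha i)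
    have h3 : a i * (b i / a i - 1) = b i - a i := by rw [mul_sub, mul_one, mul_div_cancel₀ _ (ha i).ne']
    linarith [hi, h2, h3 ▸ h2]
  · rintro rfl
    refine Finset.sum_eq_zero (fun i _ => ?_)
    rw [div_self (ha i).ne', Real.log_one, mul_zero]

/-- Closed form of the trust-region regularized teacher: with `α = 1/λ`,
`q⋆ i = (r i)^(1−α) * (p i)^α / C` (geometric interpolation, `C` the normalizer) is a
positive pmf and is the unique maximizer of
`q ↦ ∑ i, q i * log (p i / r i) − λ * KL(q‖r)` over positive pmfs `q`. -/
theorem trust_region_teacher_closed_form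
    {V : Type*} [Fintype V] [Nonempty V]
    (p r : V → ℝ) (hp : ∀ i, 0 < p i) (hpsum : ∑ i, p i = 1)
    (hr : ∀ i, 0 < r i) (hrsum : ∑ i, r i = 1)
    (lam : ℝ) (hlam : 0 < lam) (α : ℝ) (hα : α = 1 / lam) :
    (∀ i, 0 < (r i) ^ (1 - α) * (p i) ^ α /
        ∑ j, (r j) ^ (1 - α) * (p j) ^ α) ∧
      ((∑ i, (r i) ^ (1 - α) * (p i) ^ α /
          ∑ j, (r j) ^ (1 - α) * (p j) ^ α) = 1) ∧
      (∀ q : V → ℝ, (∀ i, 0 < q i) → (∑ i, q i = 1) →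
        ((∑ i, q i * Real.log (p i / r i)) -
            lam * ∑ i, q i * Real.log (q i / r i) ≤
          (∑ i, ((r i) ^ (1 - α) * (p i) ^ α /
              ∑ j, (r j) ^ (1 - α) * (p j) ^ α) * Real.log (p i / r i)) -
            lam * ∑ i, ((r i) ^ (1 - α) * (p i) ^ α /
                ∑ j, (r j) ^ (1 - α) * (p j) ^ α) *
              Real.log (((r i) ^ (1 - α) * (p i) ^ α /
                ∑ j, (r j) ^ (1 - α) * (p j) ^ α) / r i)) ∧
        ((∑ i, q i * Real.log (p i / r i)) -
            lam * ∑ i, q i * Real.log (q i / r i) =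
          (∑ i, ((r i) ^ (1 - α) * (p i) ^ α /
              ∑ j, (r j) ^ (1 - α) * (p j) ^ α) * Real.log (p i / r i)) -
            lam * ∑ i, ((r i) ^ (1 - α) * (p i) ^ α /
                ∑ j, (r j) ^ (1 - α) * (p j) ^ α) *
              Real.log (((r i) ^ (1 - α) * (p i) ^ α /
                ∑ j, (r j) ^ (1 - α) * (p j) ^ α) / r i) ↔
          q = fun i => (r i) ^ (1 - α) * (p i) ^ α /
            ∑ j, (r j) ^ (1 - α) * (p j) ^ α)) := by
  set C : ℝ := ∑ j, (r j) ^ (1 - α) * (p j) ^ α with hC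
  have hterm : ∀ i, 0 < (r i) ^ (1 - α) * (p i) ^ α := fun i =>
    mul_pos (Real.rpow_pos_of_pos (hr i) _) (Real.rpow_pos_of_pos (hp i) _)
  have hCpos : 0 < C := Finset.sum_pos (fun i _ => hterm i) Finset.univ_nonempty
  set qs : V → ℝ := fun i => (r i) ^ (1 - α) * (p i) ^ α / C with hqs
  have hqspos : ∀ i, 0 < qs i := fun i => div_pos (hterm i) hCpos
  have hqssum : ∑ i, qs i = 1 := by
    rw [hqs, ← Finset.sum_div, ← hC, div_self hCpos.ne']
  have hlamα : lam * α = 1 := by rw [hα]; field_simp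
  -- key identity: log (qs i / r i) = α * log (p i / r i) - log C
  have hlog : ∀ i, Real.log (qs i / r i) = α * Real.log (p i / r i) - Real.log C := by
    intro i
    rw [hqs]
    rw [Real.log_div (div_pos (hterm i) hCpos).ne' (hr i).ne',
        Real.log_div (hterm i).ne' hCpos.ne',
        Real.log_mul (Real.rpow_pos_of_pos (hr i) _).ne' (Real.rpow_pos_of_pos (hp i) _).ne',
        Real.log_rpow (hr i), Real.log_rpow (hp i),
        Real.log_div (hp i).ne' (hr i).ne']
    ring
  -- objective value: F q = lam * log C - lam * KL(q ‖ qs)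
  have hF : ∀ q : V → ℝ, (∀ i, 0 < q i) → (∑ i, q i = 1) →
      (∑ i, q i * Real.log (p i / r i)) - lam * ∑ i, q i * Real.log (q i / r i)
        = lam * Real.log C - lam * ∑ i, q i * Real.log (q i / qs i) := by
    intro q hq hqsum
    have hsplit : ∀ i, Real.log (q i / r i)
        = Real.log (q i / qs i) + α * Real.log (p i / r i) - Real.log C := by
      intro i
      have : Real.log (q i / r i) = Real.log (q i / qs i) + Real.log (qs i / r i) := by
        rw [Real.log_div (hq i).ne' (hr i).ne', Real.log_div (hq i).ne' (hqspos i).ne',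
            Real.log_div (hqspos i).ne' (hr i).ne']
        ring
      rw [this, hlog i]; ring
    have : ∑ i, q i * Real.log (q i / r i)
        = (∑ i, q i * Real.log (q i / qs i)) + α * (∑ i, q i * Real.log (p i / r i))
          - Real.log C := by
      calc ∑ i, q i * Real.log (q i / r i)
          = ∑ i, (q i * Real.log (q i / qs i) + α * (q i * Real.log (p i / r i))
              - Real.log C * q i) := by
            refine Finset.sum_congr rfl (fun i _ => ?_)
            rw [hsplit i]; ring
        _ = (∑ i, q i * Real.log (q i / qs i)) + α * (∑ i, q i * Real.log (p i / r i))
            - Real.log C * ∑ i, q i := by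
            rw [Finset.sum_sub_distrib, Finset.sum_add_distrib, ← Finset.mul_sum,
              ← Finset.mul_sum]
        _ = _ := by rw [hqsum]; ring
    rw [this]
    linear_combination (-(∑ i, q i * Real.log (p i / r i))) * hlamα
  have hKLqs : ∑ i, qs i * Real.log (qs i / qs i) = 0 :=
    Finset.sum_eq_zero (fun i _ => by rw [div_self (hqspos i).ne', Real.log_one, mul_zero])
  refine ⟨hqspos, hqssum, fun q hq hqsum => ?_⟩
  obtain ⟨hKLpos, hKLeq⟩ := gibbs_aux q qs hq hqspos hqsum hqssum
  have hFq := hF q hq hqsum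
  have hFqs := hF qs hqspos hqssum
  rw [hKLqs, mul_zero, sub_zero] at hFqs
  constructor
  · rw [hFq, hFqs]
    nlinarith
  · rw [hFq, hFqs]
    constructor
    · intro h
      have : ∑ i, q i * Real.log (q i / qs i) = 0 := by
        have := mul_left_cancel₀ hlam.ne' (by linarith : lam * ∑ i, q i * Real.log (q i / qs i) = lam * 0)
        simpa using this
      exact hKLeq.mp this
    · intro h
      have : ∑ i, q i * Real.log (q i / qs i) = 0 := hKLeq.mpr h
      rw [this]; ring
end

section
/- (Popoviciu-type variance bound used to bound the Hessian of the log-partition function.) Let V be a nonempty finite type, let p : V → ℝ be a pmf (p i ≥ 0 for all i and ∑_{i ∈ V} p i = 1), and let v : V → ℝ. Write M := max over i ∈ V of v i and m := min over i ∈ V of v i. Then the variance satisfies ∑_{i ∈ V} p i * (v i)² − (∑_{i ∈ V} p i * v i)² ≤ (M − m)² / 4 ≤ (∑_{i ∈ V} (v i)²) / 2. -/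
/-- Popoviciu-type variance bound: for a pmf `p` on a nonempty finite type `V` and any
`v : V → ℝ` with maximum `M` and minimum `m`, the variance of `v` under `p` is at most
`(M − m)² / 4`, which in turn is at most `(∑ i, (v i)²) / 2`. -/
theorem variance_le_sq_range_div_four
    {V : Type*} [Fintype V] [Nonempty V]
    (p : V → ℝ) (hp : ∀ i, 0 ≤ p i) (hsum : ∑ i, p i = 1) (v : V → ℝ) :
    (∑ i, p i * (v i) ^ 2 - (∑ i, p i * v i) ^ 2 ≤
        (Finset.univ.sup' Finset.univ_nonempty v -
          Finset.univ.inf' Finset.univ_nonempty v) ^ 2 / 4) ∧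
      (Finset.univ.sup' Finset.univ_nonempty v -
          Finset.univ.inf' Finset.univ_nonempty v) ^ 2 / 4 ≤
        (∑ i, (v i) ^ 2) / 2 := by
  classical
  set M := Finset.univ.sup' Finset.univ_nonempty v with hMdef
  set m := Finset.univ.inf' Finset.univ_nonempty v with hmdef
  have hMv : ∀ i, v i ≤ M := fun i => Finset.le_sup' v (Finset.mem_univ i)
  have hmv : ∀ i, m ≤ v i := fun i => Finset.inf'_le v (Finset.mem_univ i)
  set μ := ∑ i, p i * v i with hμ
  have key : 0 ≤ ∑ i, p i * ((M - v i) * (v i - m)) :=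
    Finset.sum_nonneg fun i _ =>
      mul_nonneg (hp i) (mul_nonneg (by linarith [hMv i]) (by linarith [hmv i]))
  have expand : ∑ i, p i * ((M - v i) * (v i - m)) =
      (M + m) * (∑ i, p i * v i) - M * m * (∑ i, p i) - ∑ i, p i * v i ^ 2 := by
    rw [Finset.mul_sum, Finset.mul_sum, ← Finset.sum_sub_distrib, ← Finset.sum_sub_distrib]
    exact Finset.sum_congr rfl fun i _ => by ring
  rw [expand, hsum] at key
  constructor
  · nlinarith [sq_nonneg (M + m - 2 * μ)]
  · obtain ⟨i0, _, hi0⟩ := Finset.exists_mem_eq_sup' (Finset.univ_nonempty (α := V)) v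
    obtain ⟨i1, _, hi1⟩ := Finset.exists_mem_eq_inf' (Finset.univ_nonempty (α := V)) v
    by_cases h : i0 = i1
    · have hMm : M = m := by rw [hMdef, hmdef, hi0, hi1, h]
      have : 0 ≤ ∑ i, (v i) ^ 2 := Finset.sum_nonneg fun i _ => sq_nonneg _
      rw [hMm]
      simp
      linarith
    · have hsub : ∑ i ∈ ({i0, i1} : Finset V), (v i) ^ 2 ≤ ∑ i, (v i) ^ 2 :=
        Finset.sum_le_sum_of_subset_of_nonneg (Finset.subset_univ _)
          (fun i _ _ => sq_nonneg _)
      rw [Finset.sum_pair h] at hsub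
      have hM : M = v i0 := by rw [hMdef, hi0]
      have hm : m = v i1 := by rw [hmdef, hi1]
      rw [← hM, ← hm] at hsub
      nlinarith [sq_nonneg (M + m)]
end

section
/- (Quadratic smoothness of the log-partition function with constant 1/2.) Let V be a nonempty finite type and define A : (V → ℝ) → ℝ by A(z) := Real.log (∑_{i ∈ V} Real.exp (z i)) and softmax z i := Real.exp (z i) / ∑_{j ∈ V} Real.exp (z j). Then for all a b : V → ℝ, A(b) ≤ A(a) + ∑_{i ∈ V} softmax a i * (b i − a i) + (1/4) * ∑_{i ∈ V} (b i − a i)². -/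
/-!
Restrict `A` to the line `t ↦ a + t (b - a)`. Its second derivative there is the variance of
`b - a` under the softmax weights, and the variance of any distribution is at most the square of
half the range of the values, `((max - min) / 2)² ≤ (max² + min²) / 2 ≤ ‖b - a‖² / 2`. A function
whose second derivative is bounded by `K` lies below its tangent line plus `K/2 · (y - x)²`
(subtracting `K t² / 2` makes it concave), which gives the constant `1/4`.
-/

open Finset Real

theorem le_add_deriv_mul_add_sq_of_deriv2_le {f f' f'' : ℝ → ℝ} {K : ℝ}
    (hf : ∀ t, HasDerivAt f (f' t) t) (hf' : ∀ t, HasDerivAt f' (f'' t) t)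
    (hK : ∀ t, f'' t ≤ K) (x y : ℝ) :
    f y ≤ f x + f' x * (y - x) + K / 2 * (y - x) ^ 2 := by
  set g : ℝ → ℝ := fun t ↦ f t - K / 2 * t ^ 2
  have hg' (t : ℝ) : HasDerivAt g (f' t - K * t) t :=
    ((hf t).fun_sub ((hasDerivAt_pow 2 t).const_mul (K / 2))).congr_deriv (by ring)
  have hg'' (t : ℝ) : HasDerivAt (fun t ↦ f' t - K * t) (f'' t - K) t := by
    simpa using (hf' t).fun_sub ((hasDerivAt_id t).const_mul K)
  have hconc : ConcaveOn ℝ Set.univ g := by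
    refine concaveOn_of_hasDerivWithinAt2_nonpos convex_univ
      (fun t _ ↦ (hg' t).continuousAt.continuousWithinAt) (fun t _ ↦ (hg' t).hasDerivWithinAt)
      (fun t _ ↦ (hg'' t).hasDerivWithinAt) (fun t _ ↦ sub_nonpos.2 (hK t))
  suffices g y ≤ g x + (f' x - K * x) * (y - x) by simp only [g] at this; linarith
  rcases lt_trichotomy x y with hxy | rfl | hyx
  · have := hconc.slope_le_of_hasDerivAt trivial trivial hxy (hg' x)
    rw [slope_def_field, div_le_iff₀ (sub_pos.2 hxy)] at this
    linarith
  · simp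
  · have := hconc.le_slope_of_hasDerivAt trivial trivial hyx (hg' x)
    rw [slope_def_field, le_div_iff₀ (sub_pos.2 hyx)] at this
    linarith

section WeightedVariance

variable {ι : Type*} (s : Finset ι) (w x : ι → ℝ)

theorem sum_mul_sq_mul_sum_sub_sq_le {c B : ℝ} (hw : ∀ i ∈ s, 0 ≤ w i)
    (hB : ∀ i ∈ s, (x i - c) ^ 2 ≤ B) :
    (∑ i ∈ s, w i * x i ^ 2) * (∑ i ∈ s, w i) - (∑ i ∈ s, w i * x i) ^ 2
      ≤ B * (∑ i ∈ s, w i) ^ 2 := by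
  have hW : 0 ≤ ∑ i ∈ s, w i := sum_nonneg hw
  have hcentered : ∑ i ∈ s, w i * (x i - c) ^ 2
      = ∑ i ∈ s, w i * x i ^ 2 - 2 * c * ∑ i ∈ s, w i * x i + c ^ 2 * ∑ i ∈ s, w i := by
    simp only [mul_sum, ← sum_sub_distrib, ← sum_add_distrib]
    exact sum_congr rfl fun i _ ↦ by ring
  have hbound : ∑ i ∈ s, w i * (x i - c) ^ 2 ≤ B * ∑ i ∈ s, w i := by
    rw [mul_sum]
    exact sum_le_sum fun i hi ↦ by nlinarith [hw i hi, hB i hi]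
  -- Steiner's identity: the variance about the mean is that about `c` minus a square.
  calc (∑ i ∈ s, w i * x i ^ 2) * (∑ i ∈ s, w i) - (∑ i ∈ s, w i * x i) ^ 2
      = (∑ i ∈ s, w i) * ∑ i ∈ s, w i * (x i - c) ^ 2
          - (∑ i ∈ s, w i * x i - c * ∑ i ∈ s, w i) ^ 2 := by rw [hcentered]; ring
    _ ≤ (∑ i ∈ s, w i) * (B * ∑ i ∈ s, w i) := by
      nlinarith [mul_le_mul_of_nonneg_left hbound hW]
    _ = B * (∑ i ∈ s, w i) ^ 2 := by ring

theorem exists_forall_sq_sub_le_half_sum_sq :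
    ∃ c, ∀ i ∈ s, (x i - c) ^ 2 ≤ (1 / 2) * ∑ j ∈ s, x j ^ 2 := by
  classical
  rcases s.eq_empty_or_nonempty with rfl | hs
  · simp
  obtain ⟨j, hj, hmax⟩ := exists_max_image s x hs
  obtain ⟨k, hk, hmin⟩ := exists_min_image s x hs
  have hpair : ((x j - x k) / 2) ^ 2 ≤ (1 / 2) * ∑ j ∈ s, x j ^ 2 := by
    by_cases hjk : j = k
    · rw [hjk, sub_self, zero_div, zero_pow two_ne_zero]
      positivity
    · have : x j ^ 2 + x k ^ 2 ≤ ∑ j ∈ s, x j ^ 2 := by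
        rw [← sum_pair (f := fun i ↦ x i ^ 2) hjk]
        exact sum_le_sum_of_subset_of_nonneg (by simp [insert_subset_iff, hj, hk])
          fun i _ _ ↦ sq_nonneg _
      nlinarith [sq_nonneg (x j + x k)]
  refine ⟨(x j + x k) / 2, fun i hi ↦ le_trans ?_ hpair⟩
  have := hmax i hi
  have := hmin i hi
  exact sq_le_sq' (by linarith) (by linarith)

end WeightedVariance

section LogSumExpAlongLine

variable {ι : Type*} [Fintype ι] (a x : ι → ℝ)

theorem hasDerivAt_sum_exp_mul_pow (k : ℕ) (t : ℝ) :
    HasDerivAt (fun t ↦ ∑ i, exp (a i + t * x i) * x i ^ k)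
      (∑ i, exp (a i + t * x i) * x i ^ (k + 1)) t := by
  refine HasDerivAt.fun_sum fun i _ ↦ ?_
  have hline : HasDerivAt (fun t ↦ a i + t * x i) (x i) t := by
    simpa using ((hasDerivAt_id t).mul_const (x i)).const_add (a i)
  exact (hline.exp.mul_const _).congr_deriv (by ring)

variable [Nonempty ι]

theorem hasDerivAt_log_sum_exp_line (t : ℝ) :
    HasDerivAt (fun t ↦ log (∑ i, exp (a i + t * x i)))
      ((∑ i, exp (a i + t * x i) * x i) / ∑ i, exp (a i + t * x i)) t := by
  have := hasDerivAt_sum_exp_mul_pow a x 0 t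
  simp only [pow_zero, mul_one, zero_add, pow_one] at this
  exact this.log (by positivity)

theorem hasDerivAt_softmax_mean_line (t : ℝ) :
    HasDerivAt (fun t ↦ (∑ i, exp (a i + t * x i) * x i) / ∑ i, exp (a i + t * x i))
      (((∑ i, exp (a i + t * x i) * x i ^ 2) * (∑ i, exp (a i + t * x i))
        - (∑ i, exp (a i + t * x i) * x i) ^ 2) / (∑ i, exp (a i + t * x i)) ^ 2) t := by
  have hZ := hasDerivAt_sum_exp_mul_pow a x 0 t
  have hM := hasDerivAt_sum_exp_mul_pow a x 1 t
  simp only [pow_zero, mul_one, zero_add, pow_one] at hZ hM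
  exact (hM.div hZ (by positivity)).congr_deriv (by ring)

theorem softmax_variance_line_le_half_sum_sq (t : ℝ) :
    ((∑ i, exp (a i + t * x i) * x i ^ 2) * (∑ i, exp (a i + t * x i))
        - (∑ i, exp (a i + t * x i) * x i) ^ 2) / (∑ i, exp (a i + t * x i)) ^ 2
      ≤ (1 / 2) * ∑ i, x i ^ 2 := by
  obtain ⟨c, hc⟩ := exists_forall_sq_sub_le_half_sum_sq univ x
  rw [div_le_iff₀ (by positivity)]
  exact sum_mul_sq_mul_sum_sub_sq_le univ _ x (fun i _ ↦ (exp_pos _).le) hc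

theorem log_sum_exp_add_le :
    log (∑ i, exp (a i + x i)) ≤ log (∑ i, exp (a i))
      + (∑ i, exp (a i) * x i) / (∑ i, exp (a i)) + (1 / 4) * ∑ i, x i ^ 2 := by
  have := le_add_deriv_mul_add_sq_of_deriv2_le (hasDerivAt_log_sum_exp_line a x)
    (hasDerivAt_softmax_mean_line a x) (softmax_variance_line_le_half_sum_sq a x) 0 1
  simp only [one_mul, zero_mul, add_zero, sub_zero, one_pow, mul_one] at this
  linarith

end LogSumExpAlongLine

/-- Quadratic smoothness of the log-partition function with constant `1/2`: for all
`a b : V → ℝ`, `A b ≤ A a + ⟨softmax a, b − a⟩ + (1/4) * ‖b − a‖²` where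
`A z = log (∑ i, exp (z i))` and `softmax z i = exp (z i) / ∑ j, exp (z j)`. -/
theorem logSumExp_smoothness
    {V : Type*} [Fintype V] [Nonempty V] (a b : V → ℝ) :
    Real.log (∑ i, Real.exp (b i)) ≤
      Real.log (∑ i, Real.exp (a i)) +
        (∑ i, (Real.exp (a i) / ∑ j, Real.exp (a j)) * (b i - a i)) +
        (1 / 4) * ∑ i, (b i - a i) ^ 2 := by
  have hmean : ∑ i, (exp (a i) / ∑ j, exp (a j)) * (b i - a i)
      = (∑ i, exp (a i) * (b i - a i)) / ∑ i, exp (a i) := by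
    rw [sum_div]
    exact sum_congr rfl fun i _ ↦ div_mul_eq_mul_div _ _ _
  simpa only [hmean, add_sub_cancel] using log_sum_exp_add_le a (fun i ↦ b i - a i)
end

section
/- (Quadratic upper bound on the KL divergence between softmax distributions.) Let V be a nonempty finite type and softmax z i := Real.exp (z i) / ∑_{j ∈ V} Real.exp (z j). Then for all a b : V → ℝ, KL(softmax a ‖ softmax b) ≤ (1/4) * ∑_{i ∈ V} (a i − b i)². -/
/-!
`KL(softmax a ‖ softmax b)` is the Bregman divergence of log-sum-exp: with
`f t = log ∑ᵢ exp (aᵢ + t vᵢ)` and `v = b - a` it equals `f 1 - f 0 - f' 0`. The second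
derivative `f''` is the variance of `v` under `softmax (a + t v)`, which by Popoviciu's
inequality is at most `(max v - min v)² / 4 ≤ ‖v‖² / 2`. The second-order Taylor bound then
gives `‖v‖² / 4`.
-/

open Finset Real

theorem sum_mul_sq_sub_sq_sum_mul_le_of_mem_Icc {ι : Type*} {s : Finset ι} {w v : ι → ℝ}
    {m M : ℝ} (hw : ∀ i ∈ s, 0 ≤ w i) (hw₁ : ∑ i ∈ s, w i = 1)
    (hv : ∀ i ∈ s, v i ∈ Set.Icc m M) :
    ∑ i ∈ s, w i * v i ^ 2 - (∑ i ∈ s, w i * v i) ^ 2 ≤ ((M - m) / 2) ^ 2 := by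
  have hexpand : ∑ i ∈ s, w i * ((v i - m) * (M - v i)) =
      (M + m) * ∑ i ∈ s, w i * v i - m * M - ∑ i ∈ s, w i * v i ^ 2 := by
    rw [mul_sum, ← mul_one (m * M), ← hw₁, mul_sum, ← sum_sub_distrib, ← sum_sub_distrib]
    exact sum_congr rfl fun i _ ↦ by ring
  have hnonneg : 0 ≤ ∑ i ∈ s, w i * ((v i - m) * (M - v i)) :=
    sum_nonneg fun i hi ↦ mul_nonneg (hw i hi)
      (mul_nonneg (sub_nonneg.2 (hv i hi).1) (sub_nonneg.2 (hv i hi).2))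
  nlinarith [sq_nonneg (∑ i ∈ s, w i * v i - (M + m) / 2)]

theorem sq_sub_le_two_mul_sum_sq {ι : Type*} {s : Finset ι} (v : ι → ℝ) {i j : ι}
    (hi : i ∈ s) (hj : j ∈ s) : (v i - v j) ^ 2 ≤ 2 * ∑ k ∈ s, v k ^ 2 := by
  classical
  obtain rfl | hij := eq_or_ne i j
  · simpa using sum_nonneg fun k _ ↦ sq_nonneg (v k)
  · have hpair : v i ^ 2 + v j ^ 2 ≤ ∑ k ∈ s, v k ^ 2 := by
      rw [← sum_pair (f := fun k ↦ v k ^ 2) hij]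
      exact sum_le_sum_of_subset_of_nonneg (by simp [insert_subset_iff, hi, hj])
        fun k _ _ ↦ sq_nonneg (v k)
    nlinarith [sq_nonneg (v i + v j)]

theorem sum_mul_sq_sub_sq_sum_mul_le_half_sum_sq {ι : Type*} {s : Finset ι} {w : ι → ℝ}
    (v : ι → ℝ) (hw : ∀ i ∈ s, 0 ≤ w i) (hw₁ : ∑ i ∈ s, w i = 1) :
    ∑ i ∈ s, w i * v i ^ 2 - (∑ i ∈ s, w i * v i) ^ 2 ≤ 1 / 2 * ∑ i ∈ s, v i ^ 2 := by
  have hs : s.Nonempty := nonempty_of_sum_ne_zero (hw₁ ▸ one_ne_zero)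
  obtain ⟨i, hi, hmax⟩ := exists_max_image s v hs
  obtain ⟨j, hj, hmin⟩ := exists_min_image s v hs
  calc _ ≤ ((v i - v j) / 2) ^ 2 :=
        sum_mul_sq_sub_sq_sum_mul_le_of_mem_Icc hw hw₁ fun k hk ↦ ⟨hmin k hk, hmax k hk⟩
    _ ≤ 1 / 2 * ∑ k ∈ s, v k ^ 2 := by nlinarith [sq_sub_le_two_mul_sum_sq v hi hj]

theorem sub_sub_mul_le_of_hasDerivAt_of_le {f f' f'' : ℝ → ℝ} {C : ℝ}
    (hf : ∀ t, HasDerivAt f (f' t) t) (hf' : ∀ t, HasDerivAt f' (f'' t) t)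
    (hC : ∀ t, f'' t ≤ C) (x y : ℝ) :
    f y - f x - f' x * (y - x) ≤ C / 2 * (y - x) ^ 2 := by
  set g : ℝ → ℝ := fun t ↦ C / 2 * (t - x) ^ 2 - f t
  have hg : ∀ t, HasDerivAt g (C * (t - x) - f' t) t := fun t ↦ by
    have := (((hasDerivAt_id' t).sub_const x).pow 2).const_mul (C / 2) |>.fun_sub (hf t)
    exact this.congr_deriv (by ring)
  have hg' : ∀ t, HasDerivAt (fun t ↦ C * (t - x) - f' t) (C - f'' t) t := fun t ↦ by
    simpa using (((hasDerivAt_id t).sub_const x).const_mul C).fun_sub (hf' t)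
  have hconv : ConvexOn ℝ Set.univ g :=
    convexOn_of_hasDerivWithinAt2_nonneg convex_univ
      (fun t _ ↦ (hg t).continuousAt.continuousWithinAt)
      (fun t _ ↦ (hg t).hasDerivWithinAt) (fun t _ ↦ (hg' t).hasDerivWithinAt)
      fun t _ ↦ sub_nonneg.2 (hC t)
  suffices g x - f' x * (y - x) ≤ g y by simp only [g, sub_self] at this; linarith
  rcases lt_trichotomy x y with hxy | rfl | hyx
  · have := hconv.le_slope_of_hasDerivAt trivial trivial hxy (hg x)
    rw [slope_def_field, le_div_iff₀ (sub_pos.2 hxy)] at this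
    simp only [sub_self, mul_zero, zero_sub] at this
    linarith
  · simp
  · have := hconv.slope_le_of_hasDerivAt trivial trivial hyx (hg x)
    rw [slope_def_field, div_le_iff₀ (sub_pos.2 hyx)] at this
    simp only [sub_self, mul_zero, zero_sub] at this
    linarith

section Softmax

variable {V : Type*} [Fintype V]

noncomputable def softmax (z : V → ℝ) (i : V) : ℝ := exp (z i) / ∑ j, exp (z j)

theorem sum_exp_pos [Nonempty V] (z : V → ℝ) : 0 < ∑ j, exp (z j) :=
  sum_pos (fun _ _ ↦ exp_pos _) univ_nonempty

theorem sum_softmax [Nonempty V] (z : V → ℝ) : ∑ i, softmax z i = 1 := by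
  simp only [softmax]
  rw [← sum_div, div_self (sum_exp_pos z).ne']

theorem sum_softmax_mul_log_div_softmax [Nonempty V] (a b : V → ℝ) :
    ∑ i, softmax a i * log (softmax a i / softmax b i) =
      log (∑ j, exp (b j)) - log (∑ j, exp (a j)) - ∑ i, softmax a i * (b i - a i) := by
  have hterm : ∀ i, log (softmax a i / softmax b i) =
      log (∑ j, exp (b j)) - log (∑ j, exp (a j)) - (b i - a i) := fun i ↦ by
    have hA := (sum_exp_pos a).ne'
    have hB := (sum_exp_pos b).ne'
    rw [softmax, softmax, div_div_div_eq, log_div (mul_ne_zero (exp_ne_zero _) hB)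
      (mul_ne_zero hA (exp_ne_zero _)), log_mul (exp_ne_zero _) hB, log_mul hA (exp_ne_zero _),
      log_exp, log_exp]
    ring
  simp only [hterm, mul_sub, sum_sub_distrib, ← sum_mul, sum_softmax, one_mul]

noncomputable def expMoment (a v : V → ℝ) (k : ℕ) (t : ℝ) : ℝ :=
  ∑ i, v i ^ k * exp (a i + t * v i)

theorem hasDerivAt_expMoment (a v : V → ℝ) (k : ℕ) (t : ℝ) :
    HasDerivAt (expMoment a v k) (expMoment a v (k + 1) t) t := by
  unfold expMoment
  refine HasDerivAt.fun_sum fun i _ ↦ ?_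
  have := (((hasDerivAt_id' t).mul_const (v i)).const_add (a i)).exp.const_mul (v i ^ k)
  exact this.congr_deriv (by ring)

theorem expMoment_zero_pos [Nonempty V] (a v : V → ℝ) (t : ℝ) : 0 < expMoment a v 0 t := by
  simpa [expMoment] using sum_exp_pos fun i ↦ a i + t * v i

theorem expMoment_div_expMoment_zero (a v : V → ℝ) (k : ℕ) (t : ℝ) :
    expMoment a v k t / expMoment a v 0 t =
      ∑ i, softmax (fun i ↦ a i + t * v i) i * v i ^ k := by
  simp only [expMoment, softmax, pow_zero, one_mul, sum_div]
  exact sum_congr rfl fun i _ ↦ by ring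

theorem hasDerivAt_expMoment_one_div_expMoment_zero [Nonempty V] (a v : V → ℝ) (t : ℝ) :
    HasDerivAt (fun t ↦ expMoment a v 1 t / expMoment a v 0 t)
      (expMoment a v 2 t / expMoment a v 0 t -
        (expMoment a v 1 t / expMoment a v 0 t) ^ 2) t := by
  have hpos := (expMoment_zero_pos a v t).ne'
  refine ((hasDerivAt_expMoment a v 1 t).div (hasDerivAt_expMoment a v 0 t) hpos).congr_deriv ?_
  field_simp

theorem expMoment_two_div_sub_sq_le [Nonempty V] (a v : V → ℝ) (t : ℝ) :
    expMoment a v 2 t / expMoment a v 0 t - (expMoment a v 1 t / expMoment a v 0 t) ^ 2 ≤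
      1 / 2 * ∑ i, v i ^ 2 := by
  simp only [expMoment_div_expMoment_zero, pow_one]
  exact sum_mul_sq_sub_sq_sum_mul_le_half_sum_sq v (fun i _ ↦ by unfold softmax; positivity)
    (sum_softmax _)

end Softmax

/-- Quadratic upper bound on the KL divergence between softmax distributions: for all
`a b : V → ℝ`, `KL(softmax a ‖ softmax b) ≤ (1/4) * ∑ i, (a i − b i)²`. -/
theorem kl_softmax_le_quarter_sq_dist
    {V : Type*} [Fintype V] [Nonempty V] (a b : V → ℝ) :
    ∑ i, (Real.exp (a i) / ∑ j, Real.exp (a j)) *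
        Real.log ((Real.exp (a i) / ∑ j, Real.exp (a j)) /
          (Real.exp (b i) / ∑ j, Real.exp (b j))) ≤
      (1 / 4) * ∑ i, (a i - b i) ^ 2 := by
  set v := b - a
  have hlog t : HasDerivAt (fun t ↦ log (expMoment a v 0 t))
      (expMoment a v 1 t / expMoment a v 0 t) t :=
    (hasDerivAt_expMoment a v 0 t).log (expMoment_zero_pos a v t).ne'
  have hbound := sub_sub_mul_le_of_hasDerivAt_of_le hlog
    (hasDerivAt_expMoment_one_div_expMoment_zero a v) (expMoment_two_div_sub_sq_le a v) 0 1
  have ha : expMoment a v 0 0 = ∑ j, exp (a j) := by simp [expMoment]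
  have hb : expMoment a v 0 1 = ∑ j, exp (b j) := by simp [expMoment, v]
  have hmean : expMoment a v 1 0 / expMoment a v 0 0 = ∑ i, softmax a i * (b i - a i) := by
    simp [expMoment_div_expMoment_zero, v]
  have hnorm : ∑ i, (a i - b i) ^ 2 = ∑ i, v i ^ 2 :=
    sum_congr rfl fun i _ ↦ sub_sq_comm (a i) (b i)
  change ∑ i, softmax a i * log (softmax a i / softmax b i) ≤ _
  rw [sum_softmax_mul_log_div_softmax, ← ha, ← hb, ← hmean, hnorm]
  linarith
end

section
/- (Parameter-space deviation bound for the EMA teacher.) Let E be a real normed vector space, α ∈ (0,1), θ : ℕ → E with θref := θ 0, and define the EMA sequence θ' : ℕ → E by θ' 0 = θref and θ' k = (1 − α) • θ' (k−1) + α • θ k. Suppose there is R ≥ 0 with ‖θ i − θref‖ ≤ R for all 1 ≤ i ≤ k. Then ‖θ' k − θref‖ ≤ R * (1 − (1 − α)^k), and hence ‖θ' k − θref‖² ≤ R² * (1 − (1 − α)^k)². -/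
/-!
The deviation `θ' k - θ 0` obeys the same averaging recursion, with targets `θ k - θ 0` and
starting value `0`. Since the norm is convex, its size is at most the average of the bounds `R`
under this recursion started from `0`, which is `R * (1 - (1 - α) ^ k)`.
-/

theorem one_sub_smul_add_smul_sub {R E : Type*} [CommRing R] [AddCommGroup E] [Module R E]
    (α : R) (a b c : E) :
    (1 - α) • a + α • b - c = (1 - α) • (a - c) + α • (b - c) := by
  module

theorem norm_one_sub_smul_add_smul_le {E : Type*} [SeminormedAddCommGroup E] [NormedSpace ℝ E]
    {α : ℝ} (hα : α ∈ Set.Icc (0 : ℝ) 1) (u v : E) :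
    ‖(1 - α) • u + α • v‖ ≤ (1 - α) * ‖u‖ + α * ‖v‖ :=
  (convexOn_norm convex_univ).2 trivial trivial (sub_nonneg.2 hα.2) hα.1 (sub_add_cancel 1 α)

theorem norm_ema_sub_le {E : Type*} [SeminormedAddCommGroup E] [NormedSpace ℝ E]
    {α : ℝ} (hα : α ∈ Set.Icc (0 : ℝ) 1) {θ θ' : ℕ → E} {c : E} (h0 : θ' 0 = c)
    (hrec : ∀ n, θ' (n + 1) = (1 - α) • θ' n + α • θ (n + 1)) {R : ℝ} :
    ∀ k, (∀ i, 1 ≤ i → i ≤ k → ‖θ i - c‖ ≤ R) → ‖θ' k - c‖ ≤ R * (1 - (1 - α) ^ k)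
  | 0, _ => by simp [h0]
  | n + 1, hbound => by
    have ih := norm_ema_sub_le hα h0 hrec n fun i hi hin => hbound i hi (hin.trans n.le_succ)
    calc ‖θ' (n + 1) - c‖
        = ‖(1 - α) • (θ' n - c) + α • (θ (n + 1) - c)‖ := by
          rw [hrec, one_sub_smul_add_smul_sub]
      _ ≤ (1 - α) * ‖θ' n - c‖ + α * ‖θ (n + 1) - c‖ := norm_one_sub_smul_add_smul_le hα _ _
      _ ≤ (1 - α) * (R * (1 - (1 - α) ^ n)) + α * R := by
          gcongr
          exacts [sub_nonneg.2 hα.2, hα.1, hbound (n + 1) n.succ_pos le_rfl]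
      _ = R * (1 - (1 - α) ^ (n + 1)) := by ring

theorem ema_deviation_bound_general
    {E : Type*} [NormedAddCommGroup E] [NormedSpace ℝ E]
    (α : ℝ) (hα : α ∈ Set.Ioo (0 : ℝ) 1)
    (θ θ' : ℕ → E) (h0 : θ' 0 = θ 0)
    (hrec : ∀ k : ℕ, 1 ≤ k → θ' k = (1 - α) • θ' (k - 1) + α • θ k)
    (k : ℕ) (R : ℝ)
    (hbound : ∀ i : ℕ, 1 ≤ i → i ≤ k → ‖θ i - θ 0‖ ≤ R) :
    ‖θ' k - θ 0‖ ≤ R * (1 - (1 - α) ^ k) ∧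
      ‖θ' k - θ 0‖ ^ 2 ≤ R ^ 2 * (1 - (1 - α) ^ k) ^ 2 := by
  have hrec' (n : ℕ) : θ' (n + 1) = (1 - α) • θ' n + α • θ (n + 1) := hrec (n + 1) n.succ_pos
  have key := norm_ema_sub_le (Set.Ioo_subset_Icc_self hα) h0 hrec' k hbound
  refine ⟨key, ?_⟩
  rw [← mul_pow]
  exact pow_le_pow_left₀ (norm_nonneg _) key 2

/-- Parameter-space deviation bound for the EMA teacher: if `‖θ i − θref‖ ≤ R` for all
`1 ≤ i ≤ k`, then `‖θ' k − θref‖ ≤ R * (1 − (1−α)^k)` and hence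
`‖θ' k − θref‖² ≤ R² * (1 − (1−α)^k)²`. -/
theorem ema_deviation_bound
    {E : Type*} [NormedAddCommGroup E] [NormedSpace ℝ E]
    (α : ℝ) (hα : α ∈ Set.Ioo (0 : ℝ) 1)
    (θ θ' : ℕ → E) (h0 : θ' 0 = θ 0)
    (hrec : ∀ k : ℕ, 1 ≤ k → θ' k = (1 - α) • θ' (k - 1) + α • θ k)
    (k : ℕ) (R : ℝ) (hR : 0 ≤ R)
    (hbound : ∀ i : ℕ, 1 ≤ i → i ≤ k → ‖θ i - θ 0‖ ≤ R) :
    ‖θ' k - θ 0‖ ≤ R * (1 - (1 - α) ^ k) ∧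
      ‖θ' k - θ 0‖ ^ 2 ≤ R ^ 2 * (1 - (1 - α) ^ k) ^ 2 :=
  ema_deviation_bound_general α hα θ θ' h0 hrec k R hbound
end
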